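/- If φ is an orthonormal N-frame and η ∈ T_φ, then there exist an orthonormal N-frame u : Fin N → H₀, an orthogonal matrix Q ∈ ℝ^{N×N}, and a diagonal matrix D ∈ ℝ^{N×N} with strictly positive diagonal entries such that φ+η = u·(D^{1/2} Qᵀ) (a singular-value-type decomposition of φ+η). -/

import Mathlib

open scoped RealInnerProductSpace

/-- The outer product `⟦v,w⟧ ∈ ℝ^{N×N}` of two tuples, with entries `⟨v i, w j⟩`. -/
noncomputable def outerProd {N : ℕ} {H₀ : Type*} [NormedAddCommGroup H₀]
    [InnerProductSpace ℝ H₀] (v w : Fin N → H₀) : Matrix (Fin N) (Fin N) ℝ :=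
  Matrix.of fun i j => ⟪v i, w j⟫

/-- Multiplication of a tuple by a matrix from the right: `(vS)_j = Σ_i S_{ij} v_i`. -/
def smulMat {N : ℕ} {H₀ : Type*} [AddCommGroup H₀] [Module ℝ H₀]
    (v : Fin N → H₀) (S : Matrix (Fin N) (Fin N) ℝ) : Fin N → H₀ :=
  fun j => ∑ i, S i j • v i

/-- The inner product `(v,w)_H = Σ_j ⟨v_j, w_j⟩ = tr⟦v,w⟧`. -/
noncomputable def innerH {N : ℕ} {H₀ : Type*} [NormedAddCommGroup H₀]
    [InnerProductSpace ℝ H₀] (v w : Fin N → H₀) : ℝ :=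
  ∑ j, ⟪v j, w j⟫

/-!
The Gram matrix `G = ⟦φ+η, φ+η⟧ = I + ⟦η,η⟧` is positive definite because the cross terms
cancel for `η ∈ T_φ`. Diagonalising `G = Q D Qᵀ` with `Q` orthogonal and `D > 0`, the tuple
`u = (φ+η) Q D^{-1/2}` has Gram matrix `D^{-1/2} Qᵀ G Q D^{-1/2} = I`, and
`φ + η = u D^{1/2} Qᵀ`.
-/

namespace Matrix

theorem of_sqrt_diagonal {n : Type*} [DecidableEq n] (d : n → ℝ) :
    (of fun i j => √(diagonal d i j)) = diagonal fun i => √(d i) := by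
  ext i j
  by_cases h : i = j
  · subst h; simp
  · simp [h]

variable {n : Type*} [Fintype n] [DecidableEq n]

theorem PosDef.exists_orthogonal_diagonalization {G : Matrix n n ℝ} (hG : G.PosDef) :
    ∃ (Q : Matrix n n ℝ) (d : n → ℝ), Qᵀ * Q = 1 ∧ Q * Qᵀ = 1 ∧ (∀ i, 0 < d i) ∧
      G = Q * diagonal d * Qᵀ := by
  have hQstar : star (hG.isHermitian.eigenvectorUnitary : Matrix n n ℝ) =
      (hG.isHermitian.eigenvectorUnitary : Matrix n n ℝ)ᵀ := by
    rw [star_eq_conjTranspose, conjTranspose_eq_transpose_of_trivial]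
  refine ⟨hG.isHermitian.eigenvectorUnitary, hG.isHermitian.eigenvalues, ?_, ?_,
    hG.eigenvalues_pos, ?_⟩
  · rw [← hQstar]; exact mem_unitaryGroup_iff'.mp hG.isHermitian.eigenvectorUnitary.2
  · rw [← hQstar]; exact mem_unitaryGroup_iff.mp hG.isHermitian.eigenvectorUnitary.2
  · have := hG.isHermitian.spectral_theorem
    rw [Unitary.conjStarAlgAut_apply, hQstar] at this
    simpa [RCLike.ofReal_real_eq_id, Function.comp_def] using this

end Matrix

section Frames

open scoped Matrix

variable {N : ℕ} {H₀ : Type*} [NormedAddCommGroup H₀] [InnerProductSpace ℝ H₀]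

theorem outerProd_smulMat (v : Fin N → H₀) (S T : Matrix (Fin N) (Fin N) ℝ) :
    outerProd (smulMat v S) (smulMat v T) = Sᵀ * outerProd v v * T := by
  ext j k
  simp only [outerProd, smulMat, Matrix.of_apply, Matrix.mul_apply, Matrix.transpose_apply]
  rw [sum_inner]
  simp only [inner_sum, real_inner_smul_left, real_inner_smul_right, Finset.sum_mul]
  rw [Finset.sum_comm]
  exact Finset.sum_congr rfl fun i _ => Finset.sum_congr rfl fun l _ => by ring

theorem smulMat_smulMat (v : Fin N → H₀) (S T : Matrix (Fin N) (Fin N) ℝ) :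
    smulMat (smulMat v S) T = smulMat v (S * T) := by
  funext k
  simp only [smulMat, Matrix.mul_apply, Finset.smul_sum, Finset.sum_smul, smul_smul]
  rw [Finset.sum_comm]
  exact Finset.sum_congr rfl fun i _ => Finset.sum_congr rfl fun j _ => by rw [mul_comm]

theorem smulMat_one (v : Fin N → H₀) : smulMat v 1 = v := by
  funext j
  simp [smulMat, Matrix.one_apply]

theorem outerProd_add_add (φ η : Fin N → H₀) :
    outerProd (φ + η) (φ + η) =
      outerProd φ φ + (outerProd η φ + outerProd φ η) + outerProd η η := by
  ext i j
  simp only [outerProd, Matrix.of_apply, Matrix.add_apply, Pi.add_apply, inner_add_left,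
    inner_add_right]
  ring

theorem outerProd_self_posSemidef (v : Fin N → H₀) : (outerProd v v).PosSemidef := by
  rw [Matrix.posSemidef_iff_dotProduct_mulVec]
  refine ⟨?_, fun x => ?_⟩
  · ext i j
    simp [outerProd, real_inner_comm]
  · have : star x ⬝ᵥ outerProd v v *ᵥ x = ⟪∑ i, x i • v i, ∑ j, x j • v j⟫ := by
      simp only [dotProduct, Matrix.mulVec, Pi.star_apply, star_trivial, outerProd,
        Matrix.of_apply, sum_inner, inner_sum, real_inner_smul_left, real_inner_smul_right,
        Finset.mul_sum]
      exact Finset.sum_congr rfl fun i _ => Finset.sum_congr rfl fun j _ => by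
        rw [real_inner_comm (v j) (v i)]; ring
    rw [this]
    exact real_inner_self_nonneg

theorem exists_orthonormal_smulMat_of_posDef (v : Fin N → H₀) (hv : (outerProd v v).PosDef) :
    ∃ (u : Fin N → H₀) (Q D : Matrix (Fin N) (Fin N) ℝ),
      outerProd u u = 1 ∧ Qᵀ * Q = 1 ∧ D.IsDiag ∧ (∀ i, 0 < D i i) ∧
      v = smulMat u ((Matrix.of fun i j => √(D i j)) * Qᵀ) := by
  obtain ⟨Q, d, hQtQ, hQQt, hd, hG⟩ := hv.exists_orthogonal_diagonalization
  set s : Fin N → ℝ := fun i => √(d i)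
  have hs : ∀ i, s i ≠ 0 := fun i => (Real.sqrt_pos.mpr (hd i)).ne'
  have hs_sq : ∀ i, s i * s i = d i := fun i => Real.mul_self_sqrt (hd i).le
  have hs_inv_mul : Matrix.diagonal (fun i => (s i)⁻¹) * Matrix.diagonal s = 1 := by
    rw [Matrix.diagonal_mul_diagonal, ← Matrix.diagonal_one]
    exact congrArg _ (funext fun i => inv_mul_cancel₀ (hs i))
  have hs_inv_d : Matrix.diagonal (fun i => (s i)⁻¹) * Matrix.diagonal d *
      Matrix.diagonal (fun i => (s i)⁻¹) = 1 := by
    rw [Matrix.diagonal_mul_diagonal, Matrix.diagonal_mul_diagonal, ← Matrix.diagonal_one]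
    refine congrArg _ (funext fun i => ?_)
    rw [← hs_sq i]
    field_simp [hs i]
  refine ⟨smulMat v (Q * Matrix.diagonal fun i => (s i)⁻¹), Q, Matrix.diagonal d, ?_, hQtQ,
    Matrix.isDiag_diagonal d, fun i => by simpa using hd i, ?_⟩
  · rw [outerProd_smulMat, hG, Matrix.transpose_mul, Matrix.diagonal_transpose]
    calc Matrix.diagonal (fun i => (s i)⁻¹) * Qᵀ * (Q * Matrix.diagonal d * Qᵀ) *
          (Q * Matrix.diagonal fun i => (s i)⁻¹)
        = Matrix.diagonal (fun i => (s i)⁻¹) * (Qᵀ * Q) * Matrix.diagonal d * (Qᵀ * Q) *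
          Matrix.diagonal (fun i => (s i)⁻¹) := by noncomm_ring
      _ = 1 := by rw [hQtQ, Matrix.mul_one, Matrix.mul_one, hs_inv_d]
  · rw [Matrix.of_sqrt_diagonal, smulMat_smulMat]
    calc v = smulMat v (Q * Qᵀ) := by rw [hQQt, smulMat_one]
      _ = smulMat v (Q * (Matrix.diagonal (fun i => (s i)⁻¹) * Matrix.diagonal s) * Qᵀ) := by
        rw [hs_inv_mul, Matrix.mul_one]
      _ = _ := by simp only [Matrix.mul_assoc]; rfl

end Frames

theorem svd_type_decomposition_general {N : ℕ} {H₀ : Type*}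
    [NormedAddCommGroup H₀] [InnerProductSpace ℝ H₀]
    (φ η : Fin N → H₀) (hφ : outerProd φ φ = 1)
    (hη : outerProd η φ + outerProd φ η = 0) :
    ∃ (u : Fin N → H₀) (Q D : Matrix (Fin N) (Fin N) ℝ),
      outerProd u u = 1 ∧
      Q.transpose * Q = 1 ∧
      D.IsDiag ∧ (∀ i, 0 < D i i) ∧
      φ + η = smulMat u ((Matrix.of fun i j => Real.sqrt (D i j)) * Q.transpose) := by
  have hgram : outerProd (φ + η) (φ + η) = 1 + outerProd η η := by
    rw [outerProd_add_add, hφ, hη, add_zero]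
  apply exists_orthonormal_smulMat_of_posDef
  rw [hgram]
  exact Matrix.PosDef.one.add_posSemidef (outerProd_self_posSemidef η)

/-- singular-value-type decomposition `φ + η = u · (D^{1/2} Qᵀ)` with `u`
an orthonormal frame, `Q` orthogonal and `D` diagonal with strictly positive diagonal
entries; `D^{1/2}` is the entrywise square root of `D`. -/
theorem svd_type_decomposition {N : ℕ} (hN : 1 ≤ N) {H₀ : Type*}
    [NormedAddCommGroup H₀] [InnerProductSpace ℝ H₀]
    (φ η : Fin N → H₀) (hφ : outerProd φ φ = 1)
    (hη : outerProd η φ + outerProd φ η = 0) :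
    ∃ (u : Fin N → H₀) (Q D : Matrix (Fin N) (Fin N) ℝ),
      outerProd u u = 1 ∧
      Q.transpose * Q = 1 ∧
      D.IsDiag ∧ (∀ i, 0 < D i i) ∧
      φ + η = smulMat u ((Matrix.of fun i j => Real.sqrt (D i j)) * Q.transpose) :=
  svd_type_decomposition_general φ η hφ hη
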